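/- The transfer matrix eigenvalue expression T_{n-1}(v) defined by the dressed vacuum form satisfies the T-system functional relation T_{n-1}(v+iy) T_{n-1}(v−iy) = T_{n+y−1}(v) T_{n−y−1}(v) + T_{y−1}(v+in) T_{y−1}(v−in) for all integers n ≥ y ≥ 1. -/
import Mathlib


/-- The dressed vacuum form: `dvfT φ Q u n v` is `T_{n-1}(v)`, i.e.
`Σ_{j=1}^{n} φ(v - i(u+n+2-2j)) φ(v + i(u-n+2j)) ·
  Q(v+in) Q(v-in) / (Q(v+i(2j-n)) Q(v+i(2j-n-2)))`, with `T_{-1} = 0`. -/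
noncomputable def dvfT (φ Q : ℂ → ℂ) (u : ℂ) (n : ℕ) (v : ℂ) : ℂ :=
  ∑ j ∈ Finset.range n,
    φ (v - Complex.I * (u + (n : ℂ) + 2 - 2 * ((j : ℂ) + 1))) *
    φ (v + Complex.I * (u - (n : ℂ) + 2 * ((j : ℂ) + 1))) *
    (Q (v + Complex.I * (n : ℂ)) * Q (v - Complex.I * (n : ℂ)) /
      (Q (v + Complex.I * (2 * ((j : ℂ) + 1) - (n : ℂ))) *
       Q (v + Complex.I * (2 * ((j : ℂ) + 1) - (n : ℂ) - 2))))

/-- Auxiliary: `Fker φ Q u w = φ(w-i(u+1)) φ(w+i(u+1)) / (Q(w+i) Q(w-i))`. -/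
noncomputable def Fker (φ Q : ℂ → ℂ) (u w : ℂ) : ℂ :=
  φ (w - Complex.I * (u + 1)) * φ (w + Complex.I * (u + 1)) /
    (Q (w + Complex.I) * Q (w - Complex.I))

lemma dvf_eq (φ Q : ℂ → ℂ) (u : ℂ) (n : ℕ) (v : ℂ) :
    dvfT φ Q u n v = Q (v + Complex.I * (n : ℂ)) * Q (v - Complex.I * (n : ℂ)) *
      ∑ j ∈ Finset.range n, Fker φ Q u (v + Complex.I * (2 * (j : ℂ) + 1 - (n : ℂ))) := by
  unfold dvfT Fker
  rw [Finset.mul_sum]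
  refine Finset.sum_congr rfl fun j _ => ?_
  have h1 : v + Complex.I * (2 * (j : ℂ) + 1 - (n : ℂ)) - Complex.I * (u + 1)
      = v - Complex.I * (u + (n : ℂ) + 2 - 2 * ((j : ℂ) + 1)) := by ring
  have h2 : v + Complex.I * (2 * (j : ℂ) + 1 - (n : ℂ)) + Complex.I * (u + 1)
      = v + Complex.I * (u - (n : ℂ) + 2 * ((j : ℂ) + 1)) := by ring
  have h3 : v + Complex.I * (2 * (j : ℂ) + 1 - (n : ℂ)) + Complex.I
      = v + Complex.I * (2 * ((j : ℂ) + 1) - (n : ℂ)) := by ring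
  have h4 : v + Complex.I * (2 * (j : ℂ) + 1 - (n : ℂ)) - Complex.I
      = v + Complex.I * (2 * ((j : ℂ) + 1) - (n : ℂ) - 2) := by ring
  rw [h1, h2, h3, h4]
  ring

/-- The T-system: for all integers `n ≥ y ≥ 1` and all `v`,
`T_{n-1}(v+iy) T_{n-1}(v-iy) = T_{n+y-1}(v) T_{n-y-1}(v) +
  T_{y-1}(v+in) T_{y-1}(v-in)`, where `T_{n-1}` is the dressed vacuum form built
from arbitrary `φ, Q : ℂ → ℂ` (with `Q` nowhere zero). -/
theorem stmt_13 (φ Q : ℂ → ℂ) (u : ℂ) (hQ : ∀ z, Q z ≠ 0)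
    (n y : ℕ) (hy : 1 ≤ y) (hyn : y ≤ n) (v : ℂ) :
    dvfT φ Q u n (v + Complex.I * (y : ℂ)) * dvfT φ Q u n (v - Complex.I * (y : ℂ))
      = dvfT φ Q u (n + y) v * dvfT φ Q u (n - y) v +
        dvfT φ Q u y (v + Complex.I * (n : ℂ)) *
          dvfT φ Q u y (v - Complex.I * (n : ℂ)) := by
  obtain ⟨d, rfl⟩ : ∃ d, n = d + y := ⟨n - y, by omega⟩
  have hsub : d + y - y = d := by omega
  rw [hsub]
  -- master sum with complex offset
  set S : ℂ → ℕ → ℂ := fun m N =>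
    ∑ j ∈ Finset.range N, Fker φ Q u (v + Complex.I * (2 * (j : ℂ) + 1 + m)) with hS
  have split : ∀ (m : ℂ) (a b : ℕ), S m (a + b) = S m a + S (m + 2 * a) b := by
    intro m a b
    simp only [hS, Finset.sum_range_add]
    congr 1
    refine Finset.sum_congr rfl fun j _ => ?_
    have h : v + Complex.I * (2 * ((a + j : ℕ) : ℂ) + 1 + m)
        = v + Complex.I * (2 * (j : ℂ) + 1 + (m + 2 * (a : ℕ))) := by push_cast; ring
    rw [h]
  -- rewrite each dvfT in terms of S
  have key : ∀ (w : ℂ) (N : ℕ) (m : ℂ), w = v + Complex.I * (m + (N : ℂ)) →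
      dvfT φ Q u N w = Q (w + Complex.I * (N : ℂ)) * Q (w - Complex.I * (N : ℂ)) * S m N := by
    intro w N m hw
    rw [dvf_eq]
    congr 1
    refine Finset.sum_congr rfl fun j _ => ?_
    rw [hw]
    have h : v + Complex.I * (m + (N : ℂ)) + Complex.I * (2 * (j : ℂ) + 1 - (N : ℂ))
        = v + Complex.I * (2 * (j : ℂ) + 1 + m) := by ring
    rw [h]
  have e1 := key (v + Complex.I * (y : ℂ)) (d + y) (-(d : ℂ)) (by push_cast; ring)
  have e2 := key (v - Complex.I * (y : ℂ)) (d + y) (-(d : ℂ) - 2 * y) (by push_cast; ring)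
  have e3 := key v (d + y + y) (-(d : ℂ) - 2 * y) (by push_cast; ring)
  have e4 := key v d (-(d : ℂ)) (by push_cast; ring)
  have e5 := key (v + Complex.I * ((d + y : ℕ) : ℂ)) y ((d : ℂ)) (by push_cast; ring)
  have e6 := key (v - Complex.I * ((d + y : ℕ) : ℂ)) y (-(d : ℂ) - 2 * y) (by push_cast; ring)
  rw [e1, e2, e3, e4, e5, e6]
  -- split the sums
  have s1 : S (-(d : ℂ)) (d + y) = S (-(d : ℂ)) d + S ((d : ℂ)) y := by
    rw [split]; congr 2; push_cast; ring
  have s2 : S (-(d : ℂ) - 2 * y) (d + y) = S (-(d : ℂ) - 2 * y) y + S (-(d : ℂ)) d := by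
    have h : d + y = y + d := by omega
    rw [h, split]; congr 2; push_cast; ring
  have s3 : S (-(d : ℂ) - 2 * y) (d + y + y)
      = S (-(d : ℂ) - 2 * y) y + (S (-(d : ℂ)) d + S ((d : ℂ)) y) := by
    have h : d + y + y = y + (d + y) := by omega
    rw [h, split]
    congr 1
    have h2 : (-(d : ℂ) - 2 * y + 2 * (y : ℕ)) = -(d : ℂ) := by push_cast; ring
    rw [h2, s1]
  rw [s1, s2, s3]
  push_cast
  ring_nf
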